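/- For the pp-wave metric, at every point p ∈ ℝ⁴ the only nonvanishing components of the Riemann curvature tensor are: R⁰₂₂₁ = −R⁰₂₁₂ = ∂₂∂₂H, R⁰₂₃₁ = −R⁰₂₁₃ = ∂₃∂₂H, R⁰₃₂₁ = −R⁰₃₁₂ = ∂₂∂₃H, R⁰₃₃₁ = −R⁰₃₁₃ = ∂₃∂₃H, R²₁₂₁ = −R²₁₁₂ = ∂₂∂₂H, R²₁₃₁ = −R²₁₁₃ = ∂₃∂₂H, R³₁₂₁ = −R³₁₁₂ = ∂₂∂₃H, R³₁₃₁ = −R³₁₁₃ = ∂₃∂₃H; every component R^α_{βμν}(p) not in this list equals 0. -/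

import Mathlib

noncomputable section

open scoped BigOperators

/-- Partial derivative of `f : ℝ⁴ → ℝ` in the `μ`-th coordinate direction. -/
def pd (μ : Fin 4) (f : (Fin 4 → ℝ) → ℝ) (p : Fin 4 → ℝ) : ℝ :=
  fderiv ℝ f p (Pi.single μ 1)

/-- The pp-wave metric `ds² = 2H du² + 2 du dv − dx² − dy²` in coordinates
`(v,u,x,y)`. -/
def gmet (H : (Fin 4 → ℝ) → ℝ) (p : Fin 4 → ℝ) : Matrix (Fin 4) (Fin 4) ℝ :=
  Matrix.of fun μ ν =>
    if μ = 1 ∧ ν = 1 then 2 * H p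
    else if (μ = 0 ∧ ν = 1) ∨ (μ = 1 ∧ ν = 0) then 1
    else if (μ = 2 ∧ ν = 2) ∨ (μ = 3 ∧ ν = 3) then (-1 : ℝ)
    else 0

/-- The pointwise inverse of the pp-wave metric. -/
def ginv (H : (Fin 4 → ℝ) → ℝ) (p : Fin 4 → ℝ) : Matrix (Fin 4) (Fin 4) ℝ :=
  Matrix.of fun μ ν =>
    if μ = 0 ∧ ν = 0 then -2 * H p
    else if (μ = 0 ∧ ν = 1) ∨ (μ = 1 ∧ ν = 0) then 1
    else if (μ = 2 ∧ ν = 2) ∨ (μ = 3 ∧ ν = 3) then (-1 : ℝ)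
    else 0

/-- Christoffel symbols `Γ^l_{μν}` of the Levi-Civita connection of the pp-wave metric. -/
def Γpp (H : (Fin 4 → ℝ) → ℝ) (l μ ν : Fin 4) (p : Fin 4 → ℝ) : ℝ :=
  (1 / 2) * ∑ σ : Fin 4, ginv H p l σ *
    (pd μ (fun q => gmet H q ν σ) p + pd ν (fun q => gmet H q μ σ) p
      - pd σ (fun q => gmet H q μ ν) p)

/-- Riemann curvature components
`R^a_{bμν} = ∂_μ Γ^a_{bν} − ∂_ν Γ^a_{bμ} + Σ_γ (Γ^a_{γμ}Γ^γ_{bν} − Γ^a_{γν}Γ^γ_{bμ})`. -/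
def Riem (H : (Fin 4 → ℝ) → ℝ) (a b μ ν : Fin 4) (p : Fin 4 → ℝ) : ℝ :=
  pd μ (Γpp H a b ν) p - pd ν (Γpp H a b μ) p
    + ∑ γ : Fin 4, (Γpp H a γ μ p * Γpp H γ b ν p - Γpp H a γ ν p * Γpp H γ b μ p)

/-- Ricci tensor `Ric_{bν} = Σ_a R^a_{baν}`. -/
def Ricci (H : (Fin 4 → ℝ) → ℝ) (b ν : Fin 4) (p : Fin 4 → ℝ) : ℝ :=
  ∑ a : Fin 4, Riem H a b a ν p

/-- Scalar curvature `S = Σ_{β,ν} ginv^{βν} Ric_{βν}`. -/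
def Scal (H : (Fin 4 → ℝ) → ℝ) (p : Fin 4 → ℝ) : ℝ :=
  ∑ b : Fin 4, ∑ ν : Fin 4, ginv H p b ν * Ricci H b ν p

/-!
With `∂₀H = 0` the only nonzero Christoffel symbols are `Γ⁰₁₁ = ∂₁H`, `Γ⁰₁ᵢ = Γ⁰ᵢ₁ = ∂ᵢH` and
`Γⁱ₁₁ = ∂ᵢH` (`i = 2, 3`), since the metric varies only through `g₁₁ = 2H`. A product
`Γ^a_{γμ} Γ^γ_{bν}` of two of them survives only for `μ = ν = 1`, so the quadratic part of the
curvature cancels and `R^a_{bμν} = ∂_μ Γ^a_{bν} − ∂_ν Γ^a_{bμ}`. The components are then second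
derivatives of `H`, and the remaining ones cancel by the symmetry of second derivatives and
`∂₀∂ₖH = 0`.
-/

section PartialDerivative

variable {f : (Fin 4 → ℝ) → ℝ}

lemma pd_const (μ : Fin 4) (c : ℝ) (p : Fin 4 → ℝ) : pd μ (fun _ => c) p = 0 := by
  simp [pd]

@[simp]
lemma pd_zero (μ : Fin 4) (p : Fin 4 → ℝ) : pd μ 0 p = 0 :=
  pd_const μ 0 p

lemma pd_const_mul (μ : Fin 4) (c : ℝ) {p : Fin 4 → ℝ} (hf : DifferentiableAt ℝ f p) :
    pd μ (fun q => c * f q) p = c * pd μ f p := by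
  simp [pd, fderiv_const_mul hf]

lemma pd_pd_eq_fderiv_fderiv {p : Fin 4 → ℝ} (hf : DifferentiableAt ℝ (fderiv ℝ f) p)
    (i j : Fin 4) :
    pd i (pd j f) p = fderiv ℝ (fderiv ℝ f) p (Pi.single i 1) (Pi.single j 1) := by
  change fderiv ℝ (fun q => fderiv ℝ f q (Pi.single j 1)) p (Pi.single i 1) = _
  simp [fderiv_clm_apply hf (differentiableAt_const _)]

lemma pd_pd_comm (hf : ContDiff ℝ 2 f) (i j : Fin 4) (p : Fin 4 → ℝ) :
    pd i (pd j f) p = pd j (pd i f) p := by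
  have hf' : DifferentiableAt ℝ (fderiv ℝ f) p :=
    (hf.fderiv_right (m := 1) (by norm_num)).differentiable (by norm_num) p
  rw [pd_pd_eq_fderiv_fderiv hf', pd_pd_eq_fderiv_fderiv hf']
  exact hf.contDiffAt.isSymmSndFDerivAt (by simp) _ _

lemma pd_pd_of_pd_eq_zero {i : Fin 4} (hi : ∀ p, pd i f p = 0) (j : Fin 4) (p : Fin 4 → ℝ) :
    pd j (pd i f) p = 0 := by
  simp [show pd i f = 0 from funext hi]

end PartialDerivative

section PPWave

variable (H : (Fin 4 → ℝ) → ℝ)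

lemma pd_gmet {p : Fin 4 → ℝ} (hH : DifferentiableAt ℝ H p) (μ ν σ : Fin 4) :
    pd μ (fun q => gmet H q ν σ) p = if ν = 1 ∧ σ = 1 then 2 * pd μ H p else 0 := by
  by_cases h : ν = 1 ∧ σ = 1
  · obtain ⟨rfl, rfl⟩ := h
    simpa [gmet] using pd_const_mul μ 2 hH
  · have hconst : (fun q => gmet H q ν σ) = fun _ => gmet H 0 ν σ := by
      funext q
      simp [gmet, h]
    simp [hconst, pd_const, h]

def ppChristoffel (a b ν : Fin 4) : (Fin 4 → ℝ) → ℝ :=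
  if a = 0 ∧ b = 1 ∧ ν = 1 then pd 1 H
  else if a = 0 ∧ ((b = 1 ∧ ν = 2) ∨ (b = 2 ∧ ν = 1)) then pd 2 H
  else if a = 0 ∧ ((b = 1 ∧ ν = 3) ∨ (b = 3 ∧ ν = 1)) then pd 3 H
  else if a = 2 ∧ b = 1 ∧ ν = 1 then pd 2 H
  else if a = 3 ∧ b = 1 ∧ ν = 1 then pd 3 H
  else 0

variable {H}

lemma Γpp_eq_ppChristoffel (hH : Differentiable ℝ H) (h0 : ∀ p, pd 0 H p = 0) (a b ν : Fin 4) :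
    Γpp H a b ν = ppChristoffel H a b ν := by
  funext q
  fin_cases a <;> fin_cases b <;> fin_cases ν <;>
    simp [Γpp, ppChristoffel, ginv, Fin.sum_univ_four, pd_gmet H (hH q), h0 q]

-- `Γ^a_{0m}` always vanishes, and for `γ = 2, 3` the two factors are nonzero only when `m = 1`,
-- resp. `b = n = 1`.
lemma ppChristoffel_mul_eq_zero {m n : Fin 4} (hmn : ¬(m = 1 ∧ n = 1)) (a b γ : Fin 4)
    (p : Fin 4 → ℝ) :
    ppChristoffel H a γ m p * ppChristoffel H γ b n p = 0 := by
  fin_cases γ <;> simp [ppChristoffel] <;> split_ifs <;> simp_all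

lemma Riem_eq_pd_sub_pd (hH : Differentiable ℝ H) (h0 : ∀ p, pd 0 H p = 0) (a b m n : Fin 4)
    (p : Fin 4 → ℝ) :
    Riem H a b m n p = pd m (ppChristoffel H a b n) p - pd n (ppChristoffel H a b m) p := by
  have hquad : ∀ γ, Γpp H a γ m p * Γpp H γ b n p - Γpp H a γ n p * Γpp H γ b m p = 0 := by
    intro γ
    simp only [Γpp_eq_ppChristoffel hH h0]
    by_cases hmn : m = 1 ∧ n = 1
    · obtain ⟨rfl, rfl⟩ := hmn
      exact sub_self _
    · rw [ppChristoffel_mul_eq_zero hmn, ppChristoffel_mul_eq_zero (fun h => hmn h.symm), sub_zero]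
  rw [Riem, Finset.sum_eq_zero fun γ _ => hquad γ, add_zero, Γpp_eq_ppChristoffel hH h0,
    Γpp_eq_ppChristoffel hH h0]

end PPWave

/-- The nonvanishing Riemann curvature components of the pp-wave metric. -/
theorem pp_wave_riemann (H : (Fin 4 → ℝ) → ℝ)
    (hH : ContDiff ℝ (⊤ : ℕ∞) H) (h0 : ∀ p, pd 0 H p = 0) (p : Fin 4 → ℝ) :
    Riem H 0 2 2 1 p = pd 2 (pd 2 H) p ∧ Riem H 0 2 1 2 p = -pd 2 (pd 2 H) p ∧
    Riem H 0 2 3 1 p = pd 3 (pd 2 H) p ∧ Riem H 0 2 1 3 p = -pd 3 (pd 2 H) p ∧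
    Riem H 0 3 2 1 p = pd 2 (pd 3 H) p ∧ Riem H 0 3 1 2 p = -pd 2 (pd 3 H) p ∧
    Riem H 0 3 3 1 p = pd 3 (pd 3 H) p ∧ Riem H 0 3 1 3 p = -pd 3 (pd 3 H) p ∧
    Riem H 2 1 2 1 p = pd 2 (pd 2 H) p ∧ Riem H 2 1 1 2 p = -pd 2 (pd 2 H) p ∧
    Riem H 2 1 3 1 p = pd 3 (pd 2 H) p ∧ Riem H 2 1 1 3 p = -pd 3 (pd 2 H) p ∧
    Riem H 3 1 2 1 p = pd 2 (pd 3 H) p ∧ Riem H 3 1 1 2 p = -pd 2 (pd 3 H) p ∧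
    Riem H 3 1 3 1 p = pd 3 (pd 3 H) p ∧ Riem H 3 1 1 3 p = -pd 3 (pd 3 H) p ∧
    ∀ a b m n : Fin 4,
      (a, b, m, n) ∉ ({(0, 2, 2, 1), (0, 2, 1, 2), (0, 2, 3, 1), (0, 2, 1, 3),
          (0, 3, 2, 1), (0, 3, 1, 2), (0, 3, 3, 1), (0, 3, 1, 3),
          (2, 1, 2, 1), (2, 1, 1, 2), (2, 1, 3, 1), (2, 1, 1, 3),
          (3, 1, 2, 1), (3, 1, 1, 2), (3, 1, 3, 1), (3, 1, 1, 3)} :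
          Set (Fin 4 × Fin 4 × Fin 4 × Fin 4)) →
      Riem H a b m n p = 0 := by
  have hd : Differentiable ℝ H := hH.differentiable (by simp)
  have hH2 : ContDiff ℝ 2 H := hH.of_le (by norm_cast)
  have hpd0 : ∀ k, pd 0 (pd k H) p = 0 := fun k => by
    rw [pd_pd_comm hH2]
    exact pd_pd_of_pd_eq_zero h0 k p
  simp only [Riem_eq_pd_sub_pd hd h0]
  refine ⟨?_, ?_, ?_, ?_, ?_, ?_, ?_, ?_, ?_, ?_, ?_, ?_, ?_, ?_, ?_, ?_, fun a b m n => ?_⟩ <;>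
    simp [ppChristoffel]
  fin_cases a <;> fin_cases b <;> fin_cases m <;> fin_cases n <;>
    simp [pd_pd_comm hH2 _ _ p, hpd0]
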